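/- Let G be a finite connected simple chordal graph with terminal pairs (s_1,t_1), …, (s_ℓ,t_ℓ). Let x : V(G) → ℝ satisfy x_v ≥ 0 for every v and Σ_{v ∈ V(P)} x_v ≥ 1 for every index i and every simple path P from s_i to t_i. Set x̂_v = 4·x_v and assume x̂_v < 1 for every vertex v. Fix a root ρ ∈ V(G) and for every vertex v let d_v = min over simple paths Q from ρ to v of Σ_{u ∈ V(Q)} x̂_u. For r ∈ [0,1) define the bin B_r = { v ∈ V(G) : there exists an integer q with d_v − x̂_v ≤ q + r < d_v }. Then for every r ∈ [0,1) and every i, the graph G − B_r contains no path from s_i to t_i. -/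

import Mathlib

/-!
If a terminal path `P` avoided `B_r`, the values `d_v - x̂_v` and `d_v` of all its vertices would
lie in one window `(R, R + 1]`, since the level `⌈d_v - r⌉` cannot change along an edge.
For `R ≥ 0`, follow shortest `ρ`-paths back from `s` and `t` to the last vertices `u₁`, `u₂`
with `d - x̂ ≤ R`: the two remaining tails weigh less than `1` each. The vertices `u₁`, `u₂` are
joined through the tails and `P`, where `d - x̂ > R`, and through `ρ`, where `d ≤ R`, and no edge
joins these two regions; in a chordal graph this forces `u₁ = u₂` or `u₁ ~ u₂`. Either way `s` and
`t` are joined by a walk of `x̂`-weight `< 4`, i.e. of `x`-weight `< 1`, contradicting the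
covering constraint. For `R < 0` the walk through `ρ` is already that light.
-/

open SimpleGraph Walk Finset

/-- A finite simple graph is chordal if every cycle with at least 4 vertices has a chord,
i.e. an edge of the graph joining two vertices of the cycle that are not consecutive on the
cycle (equivalently, an edge between cycle vertices that is not an edge of the cycle). -/
def IsChordal {V : Type*} (G : SimpleGraph V) : Prop :=
  ∀ ⦃v : V⦄ (c : G.Walk v v), c.IsCycle → 4 ≤ c.length →
    ∃ a b : V, a ∈ c.support ∧ b ∈ c.support ∧ G.Adj a b ∧ s(a, b) ∉ c.edges

def bin {V : Type*} (d w : V → ℝ) (r : ℝ) : Set V :=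
  {v | ∃ q : ℤ, d v - w v ≤ q + r ∧ (q : ℝ) + r < d v}

section

variable {V : Type*} {G : SimpleGraph V}

namespace SimpleGraph.Walk

theorem exists_isPath_length_lt_of_isChord {u v x y : V} {p : G.Walk u v}
    (hc : p.IsChord s(x, y)) :
    ∃ q : G.Walk u v, q.IsPath ∧ q.length < p.length ∧ q.support ⊆ p.support := by
  classical
  obtain ⟨hxy, hxyp, hx, hy⟩ := isChord_sym2Mk.mp hc
  obtain ⟨i, rfl, hi⟩ := mem_support_iff_exists_getVert.mp hx
  obtain ⟨j, rfl, hj⟩ := mem_support_iff_exists_getVert.mp hy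
  clear hc hx hy
  wlog hij : i ≤ j generalizing i j
  · exact this j hj i hi hxy.symm (by rwa [Sym2.eq_swap]) (by omega)
  have hij2 : i + 2 ≤ j := by
    rcases (by omega : j = i ∨ j = i + 1 ∨ i + 2 ≤ j) with rfl | rfl | h
    · exact absurd rfl hxy.ne
    · exact absurd ((mk_mem_edges_iff_exists p).mpr ⟨i, by omega, rfl⟩) hxyp
    · exact h
  let W := (p.take i).append (cons hxy (p.drop j))
  refine ⟨W.bypass, W.bypass_isPath, ?_, ?_⟩
  · refine W.length_bypass_le_length.trans_lt ?_
    simp only [W, length_append, length_cons, take_length, drop_length]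
    omega
  · intro z hz
    replace hz := support_bypass_subset_support W hz
    simp only [W, support_append, support_cons, List.tail_cons, support_take,
      drop_support_eq_support_drop_min, List.mem_append] at hz
    exact hz.elim List.mem_of_mem_take List.mem_of_mem_drop

theorem IsPath.isCycle_append_reverse {u v : V} {p q : G.Walk u v} (hp : p.IsPath)
    (hq : q.IsPath) (hpq : ∀ x ∈ p.support, x ∈ q.support → x = u ∨ x = v)
    (hp1 : 1 < p.length) : (p.append q.reverse).IsCycle := by
  refine hp.isCycle_append hq.reverse (fun z hzp hzq => ?_) (.inl hp1)
  have hu : u ∉ p.support.tail :=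
    (List.nodup_cons.mp (p.cons_tail_support.symm ▸ hp.support_nodup)).1
  have hv : v ∉ q.reverse.support.tail :=
    (List.nodup_cons.mp (q.reverse.cons_tail_support.symm ▸ hq.reverse.support_nodup)).1
  have hzq' : z ∈ q.support := by simpa using List.mem_of_mem_tail hzq
  rcases hpq z (List.mem_of_mem_tail hzp) hzq' with rfl | rfl
  exacts [hu hzp, hv hzq]

theorem exists_eq_append_cons_of_notMem {a b : V} (p : G.Walk a b) {S : Set V}
    (hS : ∃ x ∈ p.support, x ∈ S) (hb : b ∉ S) :
    ∃ (u c : V) (h : G.Adj u c) (p₁ : G.Walk a u) (p₂ : G.Walk c b),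
      u ∈ S ∧ (∀ x ∈ p₂.support, x ∉ S) ∧ p = p₁.append (cons h p₂) := by
  induction p with
  | nil =>
    obtain ⟨x, hx, hxS⟩ := hS
    rw [support_nil, List.mem_singleton] at hx
    exact absurd (hx ▸ hxS) hb
  | @cons a c b h p ih =>
    by_cases hp : ∃ x ∈ p.support, x ∈ S
    · obtain ⟨u, c', h', p₁, p₂, hu, hp₂, rfl⟩ := ih hp hb
      exact ⟨u, c', h', cons h p₁, p₂, hu, hp₂, rfl⟩
    · simp only [not_exists, not_and] at hp
      obtain ⟨x, hx, hxS⟩ := hS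
      rw [support_cons, List.mem_cons] at hx
      obtain rfl | hx := hx
      · exact ⟨x, c, h, nil, p, hxS, hp, rfl⟩
      · exact absurd hxS (hp x hx)

theorem apply_eq_of_forall_adj {α : Type*} {a b : V} (p : G.Walk a b) {f : V → α}
    (hf : ∀ x y, x ∈ p.support → y ∈ p.support → G.Adj x y → f x = f y) :
    ∀ x ∈ p.support, f x = f a := by
  induction p with
  | nil => simp
  | @cons a c b h p ih =>
    intro x hx
    rw [support_cons, List.mem_cons] at hx
    obtain rfl | hx := hx
    · rfl
    rw [ih (fun y z hy hz => hf y z (by simp [hy]) (by simp [hz])) x hx]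
    exact (hf a c (by simp) (by simp) h).symm

end SimpleGraph.Walk

theorem IsChordal.adj_of_separated_paths [DecidableEq V] (hG : IsChordal G) {A B : Set V}
    (hAB : ∀ a ∈ A, ∀ b ∈ B, a ≠ b ∧ ¬G.Adj a b) {u v : V} (huv : u ≠ v)
    (p q : G.Walk u v) (hp : p.IsPath) (hq : q.IsPath)
    (hpA : ∀ x ∈ p.support, x = u ∨ x = v ∨ x ∈ A)
    (hqB : ∀ x ∈ q.support, x = u ∨ x = v ∨ x ∈ B) : G.Adj u v := by
  induction hn : p.length + q.length using Nat.strong_induction_on generalizing p q with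
  | _ n ih =>
  have of_length_le_one (r : G.Walk u v) (hr : r.length ≤ 1) : G.Adj u v := by
    rcases Nat.le_one_iff_eq_zero_or_eq_one.mp hr with h | h
    · exact absurd (eq_of_length_eq_zero h) huv
    · exact adj_of_length_eq_one h
  rcases le_or_gt p.length 1 with hp1 | hp1
  · exact of_length_le_one p hp1
  rcases le_or_gt q.length 1 with hq1 | hq1
  · exact of_length_le_one q hq1
  have inA : ∀ x ∈ p.support, x ∉ q.support → x ∈ A := fun x hx hxq => by
    rcases hpA x hx with rfl | rfl | h
    exacts [absurd q.start_mem_support hxq, absurd q.end_mem_support hxq, h]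
  have inB : ∀ x ∈ q.support, x ∉ p.support → x ∈ B := fun x hx hxp => by
    rcases hqB x hx with rfl | rfl | h
    exacts [absurd p.start_mem_support hxp, absurd p.end_mem_support hxp, h]
  have hpq : ∀ x ∈ p.support, x ∈ q.support → x = u ∨ x = v := fun x hxp hxq => by
    by_contra! h
    exact (hAB x (((hpA x hxp).resolve_left h.1).resolve_left h.2) x
      (((hqB x hxq).resolve_left h.1).resolve_left h.2)).1 rfl
  -- A chord of the cycle `p ++ q.reverse` either shortcuts `p` or `q`, or joins `A` to `B`.
  obtain ⟨a, b, ha, hb, hab, habe⟩ :=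
    hG _ (hp.isCycle_append_reverse hq hpq hp1) (by simp; omega)
  simp only [mem_support_append_iff, support_reverse, List.mem_reverse, edges_append,
    edges_reverse, List.mem_append, not_or] at ha hb habe
  by_cases hap : a ∈ p.support ∧ b ∈ p.support
  · obtain ⟨p', hp', hlen, hsub⟩ :=
      exists_isPath_length_lt_of_isChord (isChord_sym2Mk.mpr ⟨hab, habe.1, hap⟩)
    exact ih _ (by omega) p' q hp' hq (fun x hx => hpA x (hsub hx)) hqB rfl
  by_cases haq : a ∈ q.support ∧ b ∈ q.support
  · obtain ⟨q', hq', hlen, hsub⟩ :=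
      exists_isPath_length_lt_of_isChord (isChord_sym2Mk.mpr ⟨hab, habe.2, haq⟩)
    exact ih _ (by omega) p q' hp hq' hpA (fun x hx => hqB x (hsub hx)) rfl
  rcases ha with ha | ha <;> rcases hb with hb | hb
  · exact absurd ⟨ha, hb⟩ hap
  · exact absurd hab (hAB a (inA a ha fun h => haq ⟨h, hb⟩) b (inB b hb fun h => hap ⟨ha, h⟩)).2
  · exact absurd hab.symm
      (hAB b (inA b hb fun h => haq ⟨ha, h⟩) a (inB a ha fun h => hap ⟨h, hb⟩)).2
  · exact absurd ⟨ha, hb⟩ haq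

namespace SimpleGraph

variable [DecidableEq V] {w : V → ℝ}

namespace Walk

variable (w) in
def vertexSum {u v : V} (p : G.Walk u v) : ℝ := ∑ x ∈ p.support.toFinset, w x

@[simp]
theorem vertexSum_nil {u : V} : (nil : G.Walk u u).vertexSum w = w u := by
  simp [vertexSum]

@[simp]
theorem vertexSum_reverse {u v : V} (p : G.Walk u v) : p.reverse.vertexSum w = p.vertexSum w := by
  simp [vertexSum]

theorem vertexSum_le_of_subset (hw : ∀ x, 0 ≤ w x) {u v u' v' : V} {p : G.Walk u v}
    {q : G.Walk u' v'} (h : p.support ⊆ q.support) : p.vertexSum w ≤ q.vertexSum w :=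
  sum_le_sum_of_subset_of_nonneg (fun x hx => by simpa using h (by simpa using hx))
    fun x _ _ => hw x

theorem vertexSum_le_add_of_subset (hw : ∀ x, 0 ≤ w x) {u v u' v' u'' v'' : V}
    {p : G.Walk u v} {q : G.Walk u' v'} {r : G.Walk u'' v''}
    (h : ∀ x ∈ p.support, x ∈ q.support ∨ x ∈ r.support) :
    p.vertexSum w ≤ q.vertexSum w + r.vertexSum w := by
  calc p.vertexSum w ≤ ∑ x ∈ q.support.toFinset ∪ r.support.toFinset, w x :=
        sum_le_sum_of_subset_of_nonneg (fun x hx => by simpa using h x (by simpa using hx))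
          fun x _ _ => hw x
    _ ≤ q.vertexSum w + r.vertexSum w := by
        rw [vertexSum, vertexSum, ← sum_union_inter]
        exact le_add_of_nonneg_right (sum_nonneg fun x _ => hw x)

theorem vertexSum_append_cons_le (hw : ∀ x, 0 ≤ w x) {u a b v : V} (p : G.Walk u a)
    (h : G.Adj a b) (q : G.Walk b v) :
    (p.append (cons h q)).vertexSum w ≤ p.vertexSum w + q.vertexSum w :=
  vertexSum_le_add_of_subset hw fun x hx => by simpa [support_append] using hx

theorem vertexSum_append_cons_of_isPath {u a b v : V} (p : G.Walk u a) (h : G.Adj a b)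
    (q : G.Walk b v) (hpq : (p.append (cons h q)).IsPath) :
    (p.append (cons h q)).vertexSum w = p.vertexSum w + q.vertexSum w := by
  have hs : (p.append (cons h q)).support = p.support ++ q.support := by simp [support_append]
  have hnd := hpq.support_nodup
  rw [hs, List.nodup_append] at hnd
  rw [vertexSum, hs, List.toFinset_append, sum_union]
  · rfl
  · exact List.disjoint_toFinset_iff_disjoint.mpr fun x hxp hxq => hnd.2.2 x hxp x hxq rfl

end Walk

structure IsMinPathWeight (G : SimpleGraph V) (w : V → ℝ) (ρ : V) (d : V → ℝ) : Prop where
  le : ∀ v (Q : G.Walk ρ v), Q.IsPath → d v ≤ Q.vertexSum w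
  exists_eq : ∀ v, ∃ Q : G.Walk ρ v, Q.IsPath ∧ d v = Q.vertexSum w

namespace IsMinPathWeight

variable {ρ : V} {d : V → ℝ}

theorem le_vertexSum (hd : IsMinPathWeight G w ρ d) (hw : ∀ x, 0 ≤ w x) {v : V}
    (W : G.Walk ρ v) : d v ≤ W.vertexSum w :=
  (hd.le v _ W.bypass_isPath).trans (vertexSum_le_of_subset hw W.support_bypass_subset_support)

theorem le_add_of_adj (hd : IsMinPathWeight G w ρ d) (hw : ∀ x, 0 ≤ w x) {u v : V}
    (h : G.Adj u v) : d v ≤ d u + w v := by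
  obtain ⟨Q, -, hQ⟩ := hd.exists_eq u
  calc d v ≤ (Q.append (cons h nil)).vertexSum w := hd.le_vertexSum hw _
    _ ≤ Q.vertexSum w + (nil : G.Walk v v).vertexSum w := vertexSum_append_cons_le hw Q h nil
    _ = d u + w v := by rw [hQ, vertexSum_nil]

theorem add_vertexSum_le_of_append_cons (hd : IsMinPathWeight G w ρ d) {a b v : V}
    (p : G.Walk ρ a) (h : G.Adj a b) (q : G.Walk b v) (hpq : (p.append (cons h q)).IsPath)
    (hv : d v = (p.append (cons h q)).vertexSum w) : d a + q.vertexSum w ≤ d v := by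
  rw [hv, vertexSum_append_cons_of_isPath p h q hpq]
  linarith [hd.le a p hpq.of_append_left]

theorem le_sub_of_mem_support (hd : IsMinPathWeight G w ρ d) (hw : ∀ x, 0 ≤ w x) {u : V}
    {Q : G.Walk ρ u} (hQ : Q.IsPath) (hu : d u = Q.vertexSum w) {z : V} (hz : z ∈ Q.support)
    (hzu : z ≠ u) : d z ≤ d u - w u := by
  obtain ⟨c, h, q, hq⟩ := exists_eq_cons_of_ne hzu (Q.dropUntil z hz)
  have hQq : Q = (Q.takeUntil z hz).append (cons h q) := by rw [← hq, take_spec]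
  rw [hQq] at hQ hu
  have hzq := hd.add_vertexSum_le_of_append_cons _ h q hQ hu
  have hwu : w u ≤ q.vertexSum w :=
    single_le_sum (fun x _ => hw x) (List.mem_toFinset.mpr q.end_mem_support)
  linarith

theorem exists_window_of_forall_notMem_bin (hd : IsMinPathWeight G w ρ d) (hw : ∀ x, 0 ≤ w x)
    {r : ℝ} {a b : V} (P : G.Walk a b) (hP : ∀ v ∈ P.support, v ∉ bin d w r) :
    ∃ R : ℝ, ∀ v ∈ P.support, R < d v - w v ∧ d v ≤ R + 1 := by
  have hlow : ∀ v ∈ P.support, (⌈d v - r⌉ : ℝ) - 1 + r < d v - w v := fun v hv => by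
    by_contra! h
    exact hP v hv ⟨⌈d v - r⌉ - 1, by push_cast; linarith,
      by push_cast; linarith [Int.ceil_lt_add_one (d v - r)]⟩
  have hup : ∀ v, d v ≤ ⌈d v - r⌉ + r := fun v => by linarith [Int.le_ceil (d v - r)]
  have hmono : ∀ x y, x ∈ P.support → G.Adj x y → ⌈d x - r⌉ ≤ ⌈d y - r⌉ := fun x y hx h => by
    have : (⌈d x - r⌉ : ℝ) < ⌈d y - r⌉ + 1 := by
      linarith [hlow x hx, hup y, hd.le_add_of_adj hw h.symm]
    exact Int.lt_add_one_iff.mp (by exact_mod_cast this)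
  have hconst := P.apply_eq_of_forall_adj (f := fun v => ⌈d v - r⌉) fun x y hx hy h =>
    le_antisymm (hmono x y hx h) (hmono y x hy h.symm)
  refine ⟨⌈d a - r⌉ - 1 + r, fun v hv => ?_⟩
  have hv' : ⌈d v - r⌉ = ⌈d a - r⌉ := hconst v hv
  constructor
  · simpa [hv'] using hlow v hv
  · linarith [hup v, (congrArg (Int.cast (R := ℝ)) hv').le]

theorem exists_shallow_adj_light_walk (hd : IsMinPathWeight G w ρ d) (hw : ∀ x, 0 ≤ w x)
    {R : ℝ} (hR : 0 ≤ R) {v : V} (hv : R < d v - w v ∧ d v ≤ R + 1) :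
    ∃ (u c : V) (_ : G.Adj u c) (B : G.Walk c v),
      d u - w u ≤ R ∧ (∀ x ∈ B.support, R < d x - w x) ∧ B.vertexSum w < 1 := by
  obtain ⟨Q, hQ, hdQ⟩ := hd.exists_eq v
  have hρ : d ρ - w ρ ≤ R := by
    have := hd.le ρ nil .nil
    rw [vertexSum_nil] at this
    linarith
  obtain ⟨u, c, h, p, B, hu, hB, rfl⟩ := Q.exists_eq_append_cons_of_notMem
    (S := {x | d x - w x ≤ R}) ⟨ρ, Q.start_mem_support, hρ⟩
    (by simp only [Set.mem_ofPred_eq]; linarith)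
  simp only [Set.mem_ofPred_eq, not_le] at hu hB
  refine ⟨u, c, h, B, hu, hB, ?_⟩
  linarith [hd.add_vertexSum_le_of_append_cons p h B hQ hdQ, hd.le_add_of_adj hw h,
    hB c B.start_mem_support]

end IsMinPathWeight

end SimpleGraph

namespace IsChordal

variable [DecidableEq V] {w : V → ℝ} {ρ : V} {d : V → ℝ} {R : ℝ}

theorem eq_or_adj_of_deep_walk (hG : IsChordal G) (hd : G.IsMinPathWeight w ρ d)
    (hw : ∀ x, 0 ≤ w x) {u₁ u₂ c₁ c₂ : V} (hu₁ : d u₁ - w u₁ ≤ R) (hu₂ : d u₂ - w u₂ ≤ R)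
    (e₁ : G.Adj u₁ c₁) (e₂ : G.Adj u₂ c₂) (κ : G.Walk c₁ c₂)
    (hκ : ∀ x ∈ κ.support, R < d x - w x) : u₁ = u₂ ∨ G.Adj u₁ u₂ := by
  refine or_iff_not_imp_left.mpr fun hne => ?_
  obtain ⟨Q₁, hQ₁, hd₁⟩ := hd.exists_eq u₁
  obtain ⟨Q₂, hQ₂, hd₂⟩ := hd.exists_eq u₂
  refine hG.adj_of_separated_paths (A := {x | R < d x - w x}) (B := {x | d x ≤ R}) ?_ hne
    (cons e₁ (κ.append (cons e₂.symm nil))).bypass (Q₁.reverse.append Q₂).bypass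
    (bypass_isPath _) (bypass_isPath _) ?_ ?_
  · intro a ha b hb
    simp only [Set.mem_ofPred_eq] at ha hb
    refine ⟨by rintro rfl; linarith [hw a], fun h => ?_⟩
    linarith [hd.le_add_of_adj hw h.symm]
  · intro x hx
    replace hx := support_bypass_subset_support _ hx
    simp only [support_cons, support_append, support_nil, List.tail_cons, List.mem_cons,
      List.mem_append, List.not_mem_nil, or_false] at hx
    rcases hx with rfl | hx | rfl
    exacts [.inl rfl, .inr (.inr (hκ x hx)), .inr (.inl rfl)]
  · intro x hx
    replace hx := support_bypass_subset_support _ hx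
    rw [mem_support_append_iff, support_reverse, List.mem_reverse] at hx
    rcases hx with hx | hx
    · by_cases hxu : x = u₁
      · exact .inl hxu
      · have := hd.le_sub_of_mem_support hw hQ₁ hd₁ hx hxu
        exact .inr (.inr (show d x ≤ R by linarith))
    · by_cases hxu : x = u₂
      · exact .inr (.inl hxu)
      · have := hd.le_sub_of_mem_support hw hQ₂ hd₂ hx hxu
        exact .inr (.inr (show d x ≤ R by linarith))

theorem exists_vertexSum_lt_four (hG : IsChordal G) (hd : G.IsMinPathWeight w ρ d)
    (hw : ∀ x, 0 ≤ w x) (hw1 : ∀ x, w x < 1) {s t : V} (P : G.Walk s t)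
    (hP : ∀ v ∈ P.support, R < d v - w v ∧ d v ≤ R + 1) :
    ∃ F : G.Walk s t, F.vertexSum w < 4 := by
  have hs := hP s P.start_mem_support
  have ht := hP t P.end_mem_support
  rcases lt_or_ge R 0 with hR | hR
  · obtain ⟨Qs, -, hQs⟩ := hd.exists_eq s
    obtain ⟨Qt, -, hQt⟩ := hd.exists_eq t
    refine ⟨Qs.reverse.append Qt, ?_⟩
    have := vertexSum_le_add_of_subset hw (p := Qs.reverse.append Qt) (q := Qs) (r := Qt)
      fun x hx => by simpa [mem_support_append_iff] using hx
    linarith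
  obtain ⟨u₁, c₁, e₁, B₁, hu₁, hB₁, hB₁w⟩ := hd.exists_shallow_adj_light_walk hw hR hs
  obtain ⟨u₂, c₂, e₂, B₂, hu₂, hB₂, hB₂w⟩ := hd.exists_shallow_adj_light_walk hw hR ht
  have hκ : ∀ x ∈ (B₁.append (P.append B₂.reverse)).support, R < d x - w x := by
    intro x hx
    simp only [mem_support_append_iff, support_reverse, List.mem_reverse] at hx
    rcases hx with hx | hx | hx
    exacts [hB₁ x hx, (hP x hx).1, hB₂ x hx]
  obtain ⟨M, hM⟩ : ∃ M : G.Walk u₁ u₂, M.vertexSum w ≤ w u₁ + w u₂ := by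
    rcases hG.eq_or_adj_of_deep_walk hd hw hu₁ hu₂ e₁ e₂ _ hκ with rfl | h
    · exact ⟨nil, by simp [hw u₁]⟩
    · exact ⟨h.toWalk, by simp [vertexSum, sum_pair h.ne]⟩
  refine ⟨B₁.reverse.append (cons e₁.symm (M.append (cons e₂ B₂))), ?_⟩
  calc _ ≤ B₁.vertexSum w + (M.vertexSum w + B₂.vertexSum w) := by
        grw [vertexSum_append_cons_le hw, vertexSum_append_cons_le hw, vertexSum_reverse]
    _ < 4 := by linarith [hw1 u₁, hw1 u₂]

end IsChordal

end

theorem chordal_bins_are_multicuts_general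
    {V : Type*} [DecidableEq V]
    (G : SimpleGraph V) (hG : IsChordal G)
    {ℓ : ℕ} (s t : Fin ℓ → V)
    (x : V → ℝ) (hx0 : ∀ v, 0 ≤ x v)
    (hcov : ∀ (i : Fin ℓ) (P : G.Walk (s i) (t i)), P.IsPath →
      1 ≤ ∑ v ∈ P.support.toFinset, x v)
    (xh : V → ℝ) (hxh : ∀ v, xh v = 4 * x v) (hxh1 : ∀ v, xh v < 1)
    (ρ : V) (d : V → ℝ)
    (hdle : ∀ (v : V) (Q : G.Walk ρ v), Q.IsPath → d v ≤ ∑ u ∈ Q.support.toFinset, xh u)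
    (hdeq : ∀ v : V, ∃ Q : G.Walk ρ v, Q.IsPath ∧ d v = ∑ u ∈ Q.support.toFinset, xh u)
    (r : ℝ) :
    ∀ (i : Fin ℓ) (P : G.Walk (s i) (t i)), P.IsPath →
      ∃ v ∈ P.support, ∃ q : ℤ, d v - xh v ≤ q + r ∧ (q : ℝ) + r < d v := by
  have hd : G.IsMinPathWeight xh ρ d := ⟨hdle, hdeq⟩
  have hxh0 : ∀ v, 0 ≤ xh v := fun v => by linarith [hxh v, hx0 v]
  intro i P _
  by_contra hP
  obtain ⟨R, hR⟩ :=
    hd.exists_window_of_forall_notMem_bin hxh0 P fun v hv hvB => hP ⟨v, hv, hvB⟩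
  obtain ⟨F, hF⟩ := hG.exists_vertexSum_lt_four hd hxh0 hxh1 P hR
  have hF4 : 4 ≤ F.bypass.vertexSum xh := by
    rw [vertexSum, sum_congr rfl fun v _ => hxh v, ← mul_sum]
    linarith [hcov i F.bypass F.bypass_isPath]
  linarith [vertexSum_le_of_subset hxh0 F.support_bypass_subset_support]

/-- In a connected chordal graph with a fractional multicut solution `x`,
set `x̂ = 4x` (assumed `< 1` everywhere) and let `d_v` be the minimum `x̂`-length of a simple
path from the root `ρ` to `v`. Then for every `r ∈ [0,1)` every simple path between a
terminal pair meets the bin `B_r = {v : ∃ q ∈ ℤ, d_v − x̂_v ≤ q + r < d_v}`, i.e. removing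
`B_r` disconnects every terminal pair. -/
theorem chordal_bins_are_multicuts
    {V : Type*} [Fintype V] [DecidableEq V]
    (G : SimpleGraph V) (hconn : G.Connected) (hG : IsChordal G)
    {ℓ : ℕ} (s t : Fin ℓ → V)
    (x : V → ℝ) (hx0 : ∀ v, 0 ≤ x v)
    (hcov : ∀ (i : Fin ℓ) (P : G.Walk (s i) (t i)), P.IsPath →
      1 ≤ ∑ v ∈ P.support.toFinset, x v)
    (xh : V → ℝ) (hxh : ∀ v, xh v = 4 * x v) (hxh1 : ∀ v, xh v < 1)
    (ρ : V) (d : V → ℝ)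
    (hdle : ∀ (v : V) (Q : G.Walk ρ v), Q.IsPath → d v ≤ ∑ u ∈ Q.support.toFinset, xh u)
    (hdeq : ∀ v : V, ∃ Q : G.Walk ρ v, Q.IsPath ∧ d v = ∑ u ∈ Q.support.toFinset, xh u)
    (r : ℝ) (hr : r ∈ Set.Ico (0 : ℝ) 1) :
    ∀ (i : Fin ℓ) (P : G.Walk (s i) (t i)), P.IsPath →
      ∃ v ∈ P.support, ∃ q : ℤ, d v - xh v ≤ q + r ∧ (q : ℝ) + r < d v :=
  chordal_bins_are_multicuts_general G hG s t x hx0 hcov xh hxh hxh1 ρ d hdle hdeq r
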